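/- Let S₁, …, S_{n+1} be real-valued random variables on a probability space whose joint distribution is exchangeable, i.e., for every permutation σ of {1, …, n+1} the joint law of (S_{σ(1)}, …, S_{σ(n+1)}) equals the joint law of (S₁, …, S_{n+1}). Let α ∈ (0,1), set k = ⌈(n+1)(1−α)⌉, assume k ≤ n, and let q̂ be the k-th smallest value among S₁, …, S_n (the k-th order statistic of the calibration scores). Then P(S_{n+1} ≤ q̂) ≥ 1 − α. -/

import Mathlib

open MeasureTheory

/-- The `k`-th smallest value (k-th order statistic, 1-indexed) among
`v 0, …, v (n-1)`. -/
noncomputable def kthSmallest (n : ℕ) (k : ℕ) (v : Fin n → ℝ) : ℝ :=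
  ((List.ofFn v).mergeSort (fun a b => a ≤ b)).getD (k - 1) 0

/-!
Rank each score by the number of scores strictly below it. The test score lies below the
`k`-th order statistic of the calibration scores exactly when its rank among all `n + 1`
scores is `< k`. In every realisation at least `k` of the `n + 1` scores have rank `< k`
(the `k` smallest ones), while by exchangeability each score has rank `< k` with the same
probability `p`; averaging gives `k ≤ (n + 1) p`, and `k ≥ (n + 1)(1 - α)`.
-/

open Finset
open scoped ENNReal

section

variable {α : Type*} [LinearOrder α]

theorem List.mergeSort_ofFn {n : ℕ} (v : Fin n → α) :
    (List.ofFn v).mergeSort (fun a b => a ≤ b) = List.ofFn (v ∘ Tuple.sort v) :=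
  ((List.mergeSort_perm _ _).trans ((Tuple.sort v).ofFn_comp_perm v).symm).eq_of_pairwise'
    (List.pairwise_mergeSort' (· ≤ ·) _) (Tuple.monotone_sort v).sortedLE_ofFn.pairwise

def countBelow {ι : Type*} [Fintype ι] (v : ι → α) (t : α) : ℕ := #{i | v i < t}

theorem countBelow_comp_equiv {ι κ : Type*} [Fintype ι] [Fintype κ] (e : κ ≃ ι) (v : ι → α)
    (t : α) : countBelow (v ∘ e) t = countBelow v t :=
  card_equiv e (by simp)

theorem countBelow_eq_countBelow_castSucc {n : ℕ} (v : Fin (n + 1) → α) {t : α}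
    (ht : t ≤ v (Fin.last n)) : countBelow v t = countBelow (v ∘ Fin.castSucc) t := by
  simp only [countBelow, card_filter, Fin.sum_univ_castSucc, Function.comp_apply,
    not_lt.2 ht, if_false, add_zero]

theorem Monotone.le_apply_iff_countBelow_le {n : ℕ} {w : Fin n → α} (hw : Monotone w)
    (j : Fin n) (t : α) : t ≤ w j ↔ countBelow w t ≤ j := by
  rw [← not_lt, ← not_lt, countBelow, Tuple.lt_card_lt_iff_apply_lt_of_monotone hw]

theorem le_card_countBelow_apply_lt {m k : ℕ} (hk : k ≤ m) (v : Fin m → α) :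
    k ≤ #{j | countBelow v (v j) < k} := by
  set w := v ∘ Tuple.sort v
  have hw : Monotone w := Tuple.monotone_sort v
  calc k = #{j : Fin m | j < k} := by rw [Fin.card_filter_val_lt, min_eq_right hk]
    _ ≤ #{j | countBelow w (w j) < k} := card_le_card fun j hj => by
      simp only [mem_filter, mem_univ, true_and] at hj ⊢
      exact ((hw.le_apply_iff_countBelow_le j (w j)).1 le_rfl).trans_lt hj
    _ = #{j | countBelow v (v j) < k} :=
      card_equiv (Tuple.sort v) (by simp [w, countBelow_comp_equiv])

end

theorem kthSmallest_eq_apply_sort {n k : ℕ} (hk1 : 1 ≤ k) (hkn : k ≤ n) (v : Fin n → ℝ) :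
    kthSmallest n k v = (v ∘ Tuple.sort v) ⟨k - 1, by omega⟩ := by
  rw [kthSmallest, List.mergeSort_ofFn, List.getD_eq_getElem _ _ (by simp; omega),
    List.getElem_ofFn]

theorem le_kthSmallest_iff {n k : ℕ} (hk1 : 1 ≤ k) (hkn : k ≤ n) (v : Fin n → ℝ) (t : ℝ) :
    t ≤ kthSmallest n k v ↔ countBelow v t < k := by
  rw [kthSmallest_eq_apply_sort hk1 hkn, (Tuple.monotone_sort v).le_apply_iff_countBelow_le,
    countBelow_comp_equiv]
  change countBelow v t ≤ k - 1 ↔ _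
  omega

theorem lintegral_card_filter_mem {Ω ι : Type*} [MeasurableSpace Ω] [Fintype ι] {μ : Measure Ω}
    {B : ι → Set Ω} [∀ ω j, Decidable (ω ∈ B j)] (hB : ∀ j, MeasurableSet (B j)) :
    ∫⁻ ω, (#{j | ω ∈ B j} : ℝ≥0∞) ∂μ = ∑ j, μ (B j) := by
  calc ∫⁻ ω, (#{j | ω ∈ B j} : ℝ≥0∞) ∂μ = ∫⁻ ω, ∑ j, (B j).indicator 1 ω ∂μ := by
        simp only [card_filter, Nat.cast_sum, Nat.cast_ite, Nat.cast_one, Nat.cast_zero,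
          Set.indicator_apply, Pi.one_apply]
    _ = ∑ j, μ (B j) := by
        rw [lintegral_finsetSum _ fun j _ => measurable_one.indicator (hB j)]
        simp only [lintegral_indicator_one (hB _)]

section Exchangeable

variable {ι : Type*} [Fintype ι]

theorem measurableSet_countBelow_apply_lt (j : ι) (k : ℕ) :
    MeasurableSet {x : ι → ℝ | countBelow x (x j) < k} := by
  have hcount : Measurable fun x : ι → ℝ => countBelow x (x j) := by
    simp only [countBelow, card_filter]
    exact Finset.measurable_sum _ fun i _ => Measurable.ite
      (measurableSet_lt (measurable_pi_apply i) (measurable_pi_apply j))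
      measurable_const measurable_const
  exact hcount measurableSet_Iio

theorem measure_countBelow_lt_eq {Ω : Type*} [MeasurableSpace Ω] {P : Measure Ω}
    {S : ι → Ω → ℝ} (hmeas : ∀ i, Measurable (S i))
    (hexch : ∀ σ : Equiv.Perm ι,
      Measure.map (fun ω => fun i => S (σ i) ω) P = Measure.map (fun ω => fun i => S i ω) P)
    (j j' : ι) (k : ℕ) :
    P {ω | countBelow (S · ω) (S j ω) < k} = P {ω | countBelow (S · ω) (S j' ω) < k} := by
  classical
  have hswap : ProbabilityTheory.IdentDistrib (fun ω i => S (Equiv.swap j j' i) ω)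
      (fun ω i => S i ω) P P :=
    ⟨(measurable_pi_lambda _ fun i => hmeas _).aemeasurable,
      (measurable_pi_lambda _ hmeas).aemeasurable, hexch _⟩
  calc P {ω | countBelow (S · ω) (S j ω) < k}
      = P ((fun ω i => S (Equiv.swap j j' i) ω) ⁻¹' {x | countBelow x (x j') < k}) := by
        congr 1; ext ω
        change _ ↔ countBelow ((S · ω) ∘ Equiv.swap j j') (S (Equiv.swap j j' j') ω) < k
        rw [countBelow_comp_equiv, Equiv.swap_apply_right]; rfl
    _ = P {ω | countBelow (S · ω) (S j' ω) < k} :=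
        hswap.measure_mem_eq (measurableSet_countBelow_apply_lt j' k)

end Exchangeable

/-- Conformal prediction lower coverage guarantee: for exchangeable scores
`S 0, …, S n`, with `q̂` the `⌈(n+1)(1-α)⌉`-th smallest of the first `n`
(calibration) scores, `P(S_{n+1} ≤ q̂) ≥ 1 - α`. -/
theorem conformal_coverage_lower_bound
    {Ω : Type*} [MeasurableSpace Ω] (P : Measure Ω) [IsProbabilityMeasure P]
    (n : ℕ) (S : Fin (n + 1) → Ω → ℝ) (hmeas : ∀ i, Measurable (S i))
    (hexch : ∀ σ : Equiv.Perm (Fin (n + 1)),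
      Measure.map (fun ω => fun i => S (σ i) ω) P
        = Measure.map (fun ω => fun i => S i ω) P)
    (α : ℝ) (hα : α ∈ Set.Ioo (0 : ℝ) 1)
    (hk : ⌈((n : ℝ) + 1) * (1 - α)⌉₊ ≤ n) :
    ENNReal.ofReal (1 - α) ≤
      P {ω | S (Fin.last n) ω ≤
        kthSmallest n (⌈((n : ℝ) + 1) * (1 - α)⌉₊) (fun i => S i.castSucc ω)} := by
  set k := ⌈((n : ℝ) + 1) * (1 - α)⌉₊
  set E : Fin (n + 1) → Set Ω := fun j => {ω | countBelow (S · ω) (S j ω) < k}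
  have hk1 : 1 ≤ k := Nat.one_le_ceil_iff.2 (mul_pos (by positivity) (by linarith [hα.2]))
  have hevent : {ω | S (Fin.last n) ω ≤ kthSmallest n k (fun i => S i.castSucc ω)}
      = E (Fin.last n) := by
    ext ω
    change S (Fin.last n) ω ≤ _ ↔ countBelow (S · ω) (S (Fin.last n) ω) < k
    rw [le_kthSmallest_iff hk1 hk, countBelow_eq_countBelow_castSucc (S · ω) le_rfl]
    rfl
  have hcover : (k : ℝ≥0∞) ≤ (n + 1) * P (E (Fin.last n)) := by
    calc (k : ℝ≥0∞) = ∫⁻ _, (k : ℝ≥0∞) ∂P := by simp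
      _ ≤ ∫⁻ ω, (#{j | ω ∈ E j} : ℝ≥0∞) ∂P := lintegral_mono fun ω =>
          Nat.cast_le.2 (le_card_countBelow_apply_lt (by omega) (S · ω))
      _ = ∑ j, P (E j) := lintegral_card_filter_mem fun j =>
          measurable_pi_lambda _ hmeas (measurableSet_countBelow_apply_lt j k)
      _ = (n + 1) * P (E (Fin.last n)) := by
          simp [E, measure_countBelow_lt_eq hmeas hexch _ (Fin.last n)]
  have hceil : (n + 1) * ENNReal.ofReal (1 - α) ≤ k := by
    rw [← ENNReal.ofReal_natCast k, ← ENNReal.ofReal_natCast n, ← ENNReal.ofReal_one,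
      ← ENNReal.ofReal_add (by positivity) zero_le_one, ← ENNReal.ofReal_mul (by positivity)]
    exact ENNReal.ofReal_le_ofReal (Nat.le_ceil _)
  rw [hevent]
  exact (ENNReal.mul_le_mul_iff_right (by simp) (by simp)).1 (hceil.trans hcover)
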